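/- For all î, ĵ ∈ {3, …, n+2} and all x ∈ ℝ^{n+4}, the curvature components of the metric G satisfy R^î_{ĵ, n+3, n+4}(x) = Σ_{α=1}^{N} α (A_α)_{î−2, ĵ−2} (x^{n+3})^{α−1}, while R^î_{ĵ, a, b} = 0 identically whenever {a, b} ≠ {n+3, n+4}. -/

import Mathlib

namespace HolPaper

open Matrix

/-- Points of `ℝ^{n+4}`, with coordinates indexed by `Fin (n+4)`.
The paper's index `1` is `p1`, `2` is `p2`, `î ∈ {3,…,n+2}` is `ehat i` for `i : Fin n`,
`n+3` is `q1` and `n+4` is `q2`. -/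
abbrev Pt (n : ℕ) := Fin (n + 4) → ℝ

def p1 (n : ℕ) : Fin (n + 4) := ⟨0, by omega⟩
def p2 (n : ℕ) : Fin (n + 4) := ⟨1, by omega⟩
def ehat {n : ℕ} (i : Fin n) : Fin (n + 4) := ⟨i.1 + 2, by have := i.isLt; omega⟩
def q1 (n : ℕ) : Fin (n + 4) := ⟨n + 2, by omega⟩
def q2 (n : ℕ) : Fin (n + 4) := ⟨n + 3, by omega⟩

noncomputable section

variable {n N : ℕ}

/-- `u^î(x) = Σ_ĵ Σ_α (A_α)_{î-2,ĵ-2} x^ĵ (x^{n+3})^α`. -/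
def u (A : Fin N → Matrix (Fin n) (Fin n) ℝ) (i : Fin n) (x : Pt n) : ℝ :=
  ∑ j : Fin n, ∑ α : Fin N, A α i j * x (ehat j) * x (q1 n) ^ (α.1 + 1)

/-- `F(x) = Σ_î (x^î)²`. -/
def Fq (n : ℕ) (x : Pt n) : ℝ := ∑ i : Fin n, x (ehat i) ^ 2

/-- The Gram matrix `G(x)` of the metric. -/
def Gmet (A : Fin N → Matrix (Fin n) (Fin n) ℝ) (x : Pt n) :
    Matrix (Fin (n + 4)) (Fin (n + 4)) ℝ := fun a b =>
  (if (a = p1 n ∧ b = q1 n) ∨ (a = q1 n ∧ b = p1 n) then (1 : ℝ) else 0)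
  + (if (a = p2 n ∧ b = q2 n) ∨ (a = q2 n ∧ b = p2 n) then (1 : ℝ) else 0)
  + (∑ i : Fin n, if a = ehat i ∧ b = ehat i then (1 : ℝ) else 0)
  + (∑ i : Fin n, if (a = ehat i ∧ b = q2 n) ∨ (a = q2 n ∧ b = ehat i) then u A i x else 0)
  + (if (a = q1 n ∧ b = q1 n) ∨ (a = q2 n ∧ b = q2 n) then Fq n x else 0)

/-- Partial derivative `∂_b f` of a function on `ℝ^{n+4}`. -/
def pd (b : Fin (n + 4)) (f : Pt n → ℝ) (x : Pt n) : ℝ :=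
  fderiv ℝ f x (Pi.single b 1)

/-- Christoffel symbols
`Γ^a_{bc} = ½ Σ_d G^{ad} (∂_b G_{dc} + ∂_c G_{bd} − ∂_d G_{bc})`. -/
def Γchr (A : Fin N → Matrix (Fin n) (Fin n) ℝ) (a b c : Fin (n + 4)) (x : Pt n) : ℝ :=
  (1 / 2) * ∑ d : Fin (n + 4), (Gmet A x)⁻¹ a d *
    (pd b (fun y => Gmet A y d c) x + pd c (fun y => Gmet A y b d) x
      - pd d (fun y => Gmet A y b c) x)

/-- Curvature components
`R^a_{b,c,d} = ∂_c Γ^a_{db} − ∂_d Γ^a_{cb} + Σ_e (Γ^a_{ce} Γ^e_{db} − Γ^a_{de} Γ^e_{cb})`. -/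
def Rcurv (A : Fin N → Matrix (Fin n) (Fin n) ℝ) (a b c d : Fin (n + 4)) (x : Pt n) : ℝ :=
  pd c (Γchr A a d b) x - pd d (Γchr A a c b) x
  + ∑ e : Fin (n + 4), (Γchr A a c e x * Γchr A e d b x - Γchr A a d e x * Γchr A e c b x)

/-- Auxiliary recursion for iterated covariant derivatives of the curvature; the list of
differentiation indices is stored in *reverse* order (most recent derivative first). -/
def covRAux (A : Fin N → Matrix (Fin n) (Fin n) ℝ) :
    Fin (n + 4) → Fin (n + 4) → Fin (n + 4) → Fin (n + 4) → List (Fin (n + 4)) → Pt n → ℝ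
  | a, b, c, d, [], x => Rcurv A a b c d x
  | a, b, c, d, f :: fs, x =>
      pd f (covRAux A a b c d fs) x
      + ∑ l : Fin (n + 4), Γchr A a f l x * covRAux A l b c d fs x
      - ∑ l : Fin (n + 4), Γchr A l f b x * covRAux A a l c d fs x
      - ∑ l : Fin (n + 4), Γchr A l f c x * covRAux A a b l d fs x
      - ∑ l : Fin (n + 4), Γchr A l f d x * covRAux A a b c l fs x
      - ∑ s : Fin fs.length, ∑ l : Fin (n + 4),
          Γchr A l f (fs.get s) x * covRAux A a b c d (fs.set s l) x
  termination_by a b c d fs => fs.length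
  decreasing_by all_goals simp [List.length_set]

/-- `covR A a b c d [f_1, …, f_r] x` is the component `R^a_{b,c,d;f_1;…;f_r}(x)` of the
`r`-th covariant derivative of the curvature tensor (indices in natural order). -/
def covR (A : Fin N → Matrix (Fin n) (Fin n) ℝ) (a b c d : Fin (n + 4))
    (fs : List (Fin (n + 4))) (x : Pt n) : ℝ :=
  covRAux A a b c d fs.reverse x


/-! ### Auxiliary machinery -/

section Aux

@[simp] lemma ehat_inj {i j : Fin n} : ehat i = ehat j ↔ i = j := by
  constructor
  · intro h
    have : i.1 + 2 = j.1 + 2 := congrArg Fin.val h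
    exact Fin.ext (by omega)
  · rintro rfl; rfl

@[simp] lemma p1_ne_p2 : p1 n ≠ p2 n := by simp [p1, p2, Fin.ext_iff]
@[simp] lemma p2_ne_p1 : p2 n ≠ p1 n := by simp [p1, p2, Fin.ext_iff]
@[simp] lemma p1_ne_q1 : p1 n ≠ q1 n := by simp [p1, q1, Fin.ext_iff]
@[simp] lemma q1_ne_p1 : q1 n ≠ p1 n := by simp [p1, q1, Fin.ext_iff]
@[simp] lemma p1_ne_q2 : p1 n ≠ q2 n := by simp [p1, q2, Fin.ext_iff]
@[simp] lemma q2_ne_p1 : q2 n ≠ p1 n := by simp [p1, q2, Fin.ext_iff]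
@[simp] lemma p2_ne_q1 : p2 n ≠ q1 n := by simp [p2, q1, Fin.ext_iff]
@[simp] lemma q1_ne_p2 : q1 n ≠ p2 n := by simp [p2, q1, Fin.ext_iff]
@[simp] lemma p2_ne_q2 : p2 n ≠ q2 n := by simp [p2, q2, Fin.ext_iff]
@[simp] lemma q2_ne_p2 : q2 n ≠ p2 n := by simp [p2, q2, Fin.ext_iff]
@[simp] lemma q1_ne_q2 : q1 n ≠ q2 n := by simp [q1, q2, Fin.ext_iff]
@[simp] lemma q2_ne_q1 : q2 n ≠ q1 n := by simp [q1, q2, Fin.ext_iff]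
@[simp] lemma p1_ne_ehat {i : Fin n} : p1 n ≠ ehat i := by simp [p1, ehat, Fin.ext_iff]
@[simp] lemma ehat_ne_p1 {i : Fin n} : ehat i ≠ p1 n := by simp [p1, ehat, Fin.ext_iff]
@[simp] lemma p2_ne_ehat {i : Fin n} : p2 n ≠ ehat i := by simp [p2, ehat, Fin.ext_iff]
@[simp] lemma ehat_ne_p2 {i : Fin n} : ehat i ≠ p2 n := by simp [p2, ehat, Fin.ext_iff]
@[simp] lemma q1_ne_ehat {i : Fin n} : q1 n ≠ ehat i := by
  have := i.isLt; simp [q1, ehat, Fin.ext_iff]; omega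
@[simp] lemma ehat_ne_q1 {i : Fin n} : ehat i ≠ q1 n := by
  have := i.isLt; simp [q1, ehat, Fin.ext_iff]; omega
@[simp] lemma q2_ne_ehat {i : Fin n} : q2 n ≠ ehat i := by
  have := i.isLt; simp [q2, ehat, Fin.ext_iff]; omega
@[simp] lemma ehat_ne_q2 {i : Fin n} : ehat i ≠ q2 n := by
  have := i.isLt; simp [q2, ehat, Fin.ext_iff]; omega

lemma cases5 (a : Fin (n + 4)) :
    a = p1 n ∨ a = p2 n ∨ (∃ i : Fin n, a = ehat i) ∨ a = q1 n ∨ a = q2 n := by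
  obtain ⟨v, hv⟩ := a
  rcases Nat.lt_or_ge v 2 with h | h
  · interval_cases v
    · exact Or.inl rfl
    · exact Or.inr (Or.inl rfl)
  · rcases Nat.lt_or_ge v (n + 2) with h2 | h2
    · exact Or.inr (Or.inr (Or.inl ⟨⟨v - 2, by omega⟩, Fin.ext (by simp [ehat]; omega)⟩))
    · rcases Nat.lt_or_ge v (n + 3) with h3 | h3
      · exact Or.inr (Or.inr (Or.inr (Or.inl (Fin.ext (by simp [q1]; omega)))))
      · exact Or.inr (Or.inr (Or.inr (Or.inr (Fin.ext (by simp [q2]; omega)))))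

lemma sum_split {M : Type*} [AddCommMonoid M] (f : Fin (n + 4) → M) :
    ∑ a, f a = f (p1 n) + f (p2 n) + (∑ i : Fin n, f (ehat i)) + f (q1 n) + f (q2 n) := by
  rw [Fin.sum_univ_succ, Fin.sum_univ_succ, Fin.sum_univ_castSucc, Fin.sum_univ_castSucc]
  have h0 : (0 : Fin (n + 4)) = p1 n := rfl
  have h1 : ((0 : Fin (n + 3)).succ : Fin (n + 4)) = p2 n := rfl
  have he : ∀ i : Fin n, ((i.castSucc.castSucc).succ.succ : Fin (n + 4)) = ehat i := by
    intro i; exact Fin.ext (by simp [ehat])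
  have hq1 : (((Fin.last n).castSucc).succ.succ : Fin (n + 4)) = q1 n := Fin.ext (by simp [q1])
  have hq2 : ((Fin.last (n + 1)).succ.succ : Fin (n + 4)) = q2 n := Fin.ext (by simp [q2])
  simp only [h0, h1, he, hq1, hq2]
  abel

end Aux
section Entries

variable (A : Fin N → Matrix (Fin n) (Fin n) ℝ) (x : Pt n) (i j : Fin n)

@[simp] lemma Gmet_p1_p1 : Gmet A x (p1 n) (p1 n) = 0 := by simp [Gmet]
@[simp] lemma Gmet_p1_p2 : Gmet A x (p1 n) (p2 n) = 0 := by simp [Gmet]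
@[simp] lemma Gmet_p1_e : Gmet A x (p1 n) (ehat i) = 0 := by simp [Gmet]
@[simp] lemma Gmet_p1_q1 : Gmet A x (p1 n) (q1 n) = 1 := by simp [Gmet]
@[simp] lemma Gmet_p1_q2 : Gmet A x (p1 n) (q2 n) = 0 := by simp [Gmet]
@[simp] lemma Gmet_p2_p1 : Gmet A x (p2 n) (p1 n) = 0 := by simp [Gmet]
@[simp] lemma Gmet_p2_p2 : Gmet A x (p2 n) (p2 n) = 0 := by simp [Gmet]
@[simp] lemma Gmet_p2_e : Gmet A x (p2 n) (ehat i) = 0 := by simp [Gmet]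
@[simp] lemma Gmet_p2_q1 : Gmet A x (p2 n) (q1 n) = 0 := by simp [Gmet]
@[simp] lemma Gmet_p2_q2 : Gmet A x (p2 n) (q2 n) = 1 := by simp [Gmet]
@[simp] lemma Gmet_e_p1 : Gmet A x (ehat i) (p1 n) = 0 := by simp [Gmet]
@[simp] lemma Gmet_e_p2 : Gmet A x (ehat i) (p2 n) = 0 := by simp [Gmet]
@[simp] lemma Gmet_e_e : Gmet A x (ehat i) (ehat j) = if i = j then 1 else 0 := by
  rcases eq_or_ne i j with rfl | h
  · simp [Gmet]
  · simp [Gmet, h, Finset.filter_eq_empty_iff]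
    exact fun hji => h hji.symm
@[simp] lemma Gmet_e_q1 : Gmet A x (ehat i) (q1 n) = 0 := by simp [Gmet]
@[simp] lemma Gmet_e_q2 : Gmet A x (ehat i) (q2 n) = u A i x := by simp [Gmet]
@[simp] lemma Gmet_q1_p1 : Gmet A x (q1 n) (p1 n) = 1 := by simp [Gmet]
@[simp] lemma Gmet_q1_p2 : Gmet A x (q1 n) (p2 n) = 0 := by simp [Gmet]
@[simp] lemma Gmet_q1_e : Gmet A x (q1 n) (ehat i) = 0 := by simp [Gmet]
@[simp] lemma Gmet_q1_q1 : Gmet A x (q1 n) (q1 n) = Fq n x := by simp [Gmet]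
@[simp] lemma Gmet_q1_q2 : Gmet A x (q1 n) (q2 n) = 0 := by simp [Gmet]
@[simp] lemma Gmet_q2_p1 : Gmet A x (q2 n) (p1 n) = 0 := by simp [Gmet]
@[simp] lemma Gmet_q2_p2 : Gmet A x (q2 n) (p2 n) = 1 := by simp [Gmet]
@[simp] lemma Gmet_q2_e : Gmet A x (q2 n) (ehat i) = u A i x := by simp [Gmet]
@[simp] lemma Gmet_q2_q1 : Gmet A x (q2 n) (q1 n) = 0 := by simp [Gmet]
@[simp] lemma Gmet_q2_q2 : Gmet A x (q2 n) (q2 n) = Fq n x := by simp [Gmet]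

end Entries

/-- Explicit inverse of the metric. -/
def Ginv (A : Fin N → Matrix (Fin n) (Fin n) ℝ) (x : Pt n) :
    Matrix (Fin (n + 4)) (Fin (n + 4)) ℝ := fun a b =>
  (if a = p1 n ∧ b = p1 n then -(Fq n x) else 0)
  + (if (a = p1 n ∧ b = q1 n) ∨ (a = q1 n ∧ b = p1 n) then (1 : ℝ) else 0)
  + (if a = p2 n ∧ b = p2 n then (∑ i : Fin n, u A i x ^ 2) - Fq n x else 0)
  + (∑ i : Fin n, if (a = p2 n ∧ b = ehat i) ∨ (a = ehat i ∧ b = p2 n) then -(u A i x) else 0)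
  + (if (a = p2 n ∧ b = q2 n) ∨ (a = q2 n ∧ b = p2 n) then (1 : ℝ) else 0)
  + (∑ i : Fin n, if a = ehat i ∧ b = ehat i then (1 : ℝ) else 0)

section InvEntries

variable (A : Fin N → Matrix (Fin n) (Fin n) ℝ) (x : Pt n) (i j : Fin n)

@[simp] lemma Ginv_p1_p1 : Ginv A x (p1 n) (p1 n) = -(Fq n x) := by simp [Ginv]
@[simp] lemma Ginv_p1_p2 : Ginv A x (p1 n) (p2 n) = 0 := by simp [Ginv]
@[simp] lemma Ginv_p1_e : Ginv A x (p1 n) (ehat i) = 0 := by simp [Ginv]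
@[simp] lemma Ginv_p1_q1 : Ginv A x (p1 n) (q1 n) = 1 := by simp [Ginv]
@[simp] lemma Ginv_p1_q2 : Ginv A x (p1 n) (q2 n) = 0 := by simp [Ginv]
@[simp] lemma Ginv_p2_p1 : Ginv A x (p2 n) (p1 n) = 0 := by simp [Ginv]
@[simp] lemma Ginv_p2_p2 : Ginv A x (p2 n) (p2 n) = (∑ i : Fin n, u A i x ^ 2) - Fq n x := by
  simp [Ginv]
@[simp] lemma Ginv_p2_e : Ginv A x (p2 n) (ehat i) = -(u A i x) := by simp [Ginv]
@[simp] lemma Ginv_p2_q1 : Ginv A x (p2 n) (q1 n) = 0 := by simp [Ginv]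
@[simp] lemma Ginv_p2_q2 : Ginv A x (p2 n) (q2 n) = 1 := by simp [Ginv]
@[simp] lemma Ginv_e_p1 : Ginv A x (ehat i) (p1 n) = 0 := by simp [Ginv]
@[simp] lemma Ginv_e_p2 : Ginv A x (ehat i) (p2 n) = -(u A i x) := by simp [Ginv]
@[simp] lemma Ginv_e_e : Ginv A x (ehat i) (ehat j) = if i = j then 1 else 0 := by
  rcases eq_or_ne i j with rfl | h
  · simp [Ginv]
  · simp [Ginv, h, Finset.filter_eq_empty_iff]
    exact fun hji => h hji.symm
@[simp] lemma Ginv_e_q1 : Ginv A x (ehat i) (q1 n) = 0 := by simp [Ginv]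
@[simp] lemma Ginv_e_q2 : Ginv A x (ehat i) (q2 n) = 0 := by simp [Ginv]
@[simp] lemma Ginv_q1_p1 : Ginv A x (q1 n) (p1 n) = 1 := by simp [Ginv]
@[simp] lemma Ginv_q1_p2 : Ginv A x (q1 n) (p2 n) = 0 := by simp [Ginv]
@[simp] lemma Ginv_q1_e : Ginv A x (q1 n) (ehat i) = 0 := by simp [Ginv]
@[simp] lemma Ginv_q1_q1 : Ginv A x (q1 n) (q1 n) = 0 := by simp [Ginv]
@[simp] lemma Ginv_q1_q2 : Ginv A x (q1 n) (q2 n) = 0 := by simp [Ginv]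
@[simp] lemma Ginv_q2_p1 : Ginv A x (q2 n) (p1 n) = 0 := by simp [Ginv]
@[simp] lemma Ginv_q2_p2 : Ginv A x (q2 n) (p2 n) = 1 := by simp [Ginv]
@[simp] lemma Ginv_q2_e : Ginv A x (q2 n) (ehat i) = 0 := by simp [Ginv]
@[simp] lemma Ginv_q2_q1 : Ginv A x (q2 n) (q1 n) = 0 := by simp [Ginv]
@[simp] lemma Ginv_q2_q2 : Ginv A x (q2 n) (q2 n) = 0 := by simp [Ginv]

end InvEntries

lemma Gmet_mul_Ginv (A : Fin N → Matrix (Fin n) (Fin n) ℝ) (x : Pt n) :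
    Gmet A x * Ginv A x = 1 := by
  ext a b
  rw [Matrix.mul_apply, sum_split]
  rcases cases5 a with rfl | rfl | ⟨i, rfl⟩ | rfl | rfl <;>
    rcases cases5 b with rfl | rfl | ⟨j, rfl⟩ | rfl | rfl <;>
    (simp [Matrix.one_apply, mul_ite, ite_mul, Finset.mul_sum, sq, mul_comm, mul_left_comm];
      try ring)

lemma Gmet_inv (A : Fin N → Matrix (Fin n) (Fin n) ℝ) (x : Pt n) :
    (Gmet A x)⁻¹ = Ginv A x :=
  Matrix.inv_eq_right_inv (Gmet_mul_Ginv A x)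
/-! ### Partial derivative toolkit -/

section PD

variable {b c : Fin (n + 4)} {x : Pt n}

lemma pd_const (b : Fin (n + 4)) (x : Pt n) (r : ℝ) : pd b (fun _ => r) x = 0 := by
  simp [pd]

lemma pd_coord (b c : Fin (n + 4)) (x : Pt n) :
    pd b (fun y => y c) x = if c = b then 1 else 0 := by
  have : fderiv ℝ (fun y : Pt n => y c) x
      = (ContinuousLinearMap.proj c : (Fin (n + 4) → ℝ) →L[ℝ] ℝ) :=
    (ContinuousLinearMap.proj c : (Fin (n + 4) → ℝ) →L[ℝ] ℝ).fderiv
  rw [pd, this]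
  simp [Pi.single_apply]

lemma diff_coord (c : Fin (n + 4)) : Differentiable ℝ (fun y : Pt n => y c) :=
  (ContinuousLinearMap.proj c : (Fin (n + 4) → ℝ) →L[ℝ] ℝ).differentiable

lemma pd_add {f g : Pt n → ℝ} (hf : DifferentiableAt ℝ f x) (hg : DifferentiableAt ℝ g x) :
    pd b (fun y => f y + g y) x = pd b f x + pd b g x := by
  simp [pd, fderiv_fun_add hf hg]

lemma pd_mul {f g : Pt n → ℝ} (hf : DifferentiableAt ℝ f x) (hg : DifferentiableAt ℝ g x) :
    pd b (fun y => f y * g y) x = pd b f x * g x + f x * pd b g x := by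
  simp [pd, fderiv_fun_mul hf hg]
  ring

lemma pd_const_mul {f : Pt n → ℝ} (hf : DifferentiableAt ℝ f x) (r : ℝ) :
    pd b (fun y => r * f y) x = r * pd b f x := by
  simp [pd, fderiv_const_mul hf r]

lemma pd_sum {ι : Type*} (s : Finset ι) {f : ι → Pt n → ℝ}
    (h : ∀ i ∈ s, DifferentiableAt ℝ (f i) x) :
    pd b (fun y => ∑ i ∈ s, f i y) x = ∑ i ∈ s, pd b (f i) x := by
  simp [pd, fderiv_fun_sum h]

lemma pd_pow_succ {f : Pt n → ℝ} (hf : Differentiable ℝ f) (k : ℕ) :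
    pd b (fun y => f y ^ (k + 1)) x = (k + 1 : ℝ) * f x ^ k * pd b f x := by
  induction k with
  | zero =>
      have h : (fun y => f y ^ (0 + 1)) = f := by funext y; ring
      rw [h]; norm_num
  | succ m ih =>
      have : (fun y => f y ^ (m + 2)) = fun y => f y ^ (m + 1) * f y := by
        funext y; ring
      rw [this, pd_mul ((hf.fun_pow (m + 1)) x) (hf x), ih]
      push_cast
      ring

end PD

/-! ### The basic scalar fields and their derivatives -/

def Pf (A : Fin N → Matrix (Fin n) (Fin n) ℝ) (i k : Fin n) (x : Pt n) : ℝ :=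
  ∑ α : Fin N, A α i k * x (q1 n) ^ (α.1 + 1)

def Qf (A : Fin N → Matrix (Fin n) (Fin n) ℝ) (i : Fin n) (x : Pt n) : ℝ :=
  ∑ j : Fin n, ∑ α : Fin N, ((α.1 : ℝ) + 1) * A α i j * x (ehat j) * x (q1 n) ^ α.1

def Kf (A : Fin N → Matrix (Fin n) (Fin n) ℝ) (i j : Fin n) (x : Pt n) : ℝ :=
  ∑ α : Fin N, ((α.1 : ℝ) + 1) * A α i j * x (q1 n) ^ α.1

lemma Pf_skew {A : Fin N → Matrix (Fin n) (Fin n) ℝ} (hA : ∀ α, (A α)ᵀ = -A α)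
    (i k : Fin n) (x : Pt n) : Pf A k i x = -Pf A i k x := by
  unfold Pf
  rw [← Finset.sum_neg_distrib]
  refine Finset.sum_congr rfl fun α _ => ?_
  have : A α k i = -A α i k := by
    have h := congrFun (congrFun (hA α) i) k
    simpa [Matrix.transpose_apply] using h
  rw [this]; ring

lemma diff_u (A : Fin N → Matrix (Fin n) (Fin n) ℝ) (i : Fin n) :
    Differentiable ℝ (u A i) := by
  unfold u
  refine Differentiable.fun_sum fun j _ => Differentiable.fun_sum fun α _ => ?_
  exact ((differentiable_const _).mul (diff_coord _)).mul ((diff_coord _).pow _)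

lemma diff_Fq : Differentiable ℝ (Fq n) := by
  unfold Fq
  exact Differentiable.fun_sum fun i _ => (diff_coord _).pow _

lemma diff_Pf (A : Fin N → Matrix (Fin n) (Fin n) ℝ) (i k : Fin n) :
    Differentiable ℝ (Pf A i k) := by
  unfold Pf
  exact Differentiable.fun_sum fun α _ => (differentiable_const _).mul ((diff_coord _).pow _)

lemma pd_u (A : Fin N → Matrix (Fin n) (Fin n) ℝ) (i : Fin n) (b : Fin (n + 4)) (x : Pt n) :
    pd b (u A i) x
      = (∑ k : Fin n, (if ehat k = b then 1 else 0) * Pf A i k x)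
        + (if q1 n = b then 1 else 0) * Qf A i x := by
  have h1 : pd b (u A i) x
      = ∑ j : Fin n, ∑ α : Fin N,
          (A α i j * ((if ehat j = b then 1 else 0) * x (q1 n) ^ (α.1 + 1))
            + A α i j * x (ehat j) * (((α.1 : ℝ) + 1) * x (q1 n) ^ α.1
                * (if q1 n = b then 1 else 0))) := by
    unfold u
    rw [pd_sum _ (fun j _ => by
      exact DifferentiableAt.fun_sum fun α _ =>
        (((differentiable_const _).fun_mul (diff_coord _)).fun_mul ((diff_coord _).fun_pow _)) x)]
    refine Finset.sum_congr rfl fun j _ => ?_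
    rw [pd_sum _ (fun α _ =>
      (((differentiable_const _).fun_mul (diff_coord _)).fun_mul ((diff_coord _).fun_pow _)) x)]
    refine Finset.sum_congr rfl fun α _ => ?_
    have hfg : pd b (fun y => A α i j * y (ehat j) * y (q1 n) ^ (α.1 + 1)) x
        = pd b (fun y => A α i j * y (ehat j)) x * x (q1 n) ^ (α.1 + 1)
          + (A α i j * x (ehat j)) * pd b (fun y => y (q1 n) ^ (α.1 + 1)) x :=
      pd_mul (((differentiable_const _).mul (diff_coord _)) x) (((diff_coord _).pow _) x)
    rw [hfg, pd_const_mul ((diff_coord _) x), pd_coord, pd_pow_succ (diff_coord _), pd_coord]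
    push_cast
    ring
  rw [h1]
  simp only [Finset.sum_add_distrib]
  congr 1
  · refine Finset.sum_congr rfl fun j _ => ?_
    unfold Pf
    rw [Finset.mul_sum]
    exact Finset.sum_congr rfl fun α _ => by ring
  · unfold Qf
    rw [Finset.mul_sum]
    refine Finset.sum_congr rfl fun j _ => ?_
    rw [Finset.mul_sum]
    exact Finset.sum_congr rfl fun α _ => by ring

lemma pd_Fq (b : Fin (n + 4)) (x : Pt n) :
    pd b (Fq n) x = ∑ k : Fin n, (if ehat k = b then 1 else 0) * (2 * x (ehat k)) := by
  unfold Fq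
  rw [pd_sum _ (fun i _ => ((diff_coord _).fun_pow _) x)]
  refine Finset.sum_congr rfl fun k _ => ?_
  have : pd b (fun y => y (ehat k) ^ 2) x
      = (1 + 1 : ℝ) * x (ehat k) ^ 1 * pd b (fun y => y (ehat k)) x := by
    simpa using pd_pow_succ (diff_coord (ehat k)) 1 (b := b) (x := x)
  rw [this, pd_coord]
  ring

lemma pd_Pf (A : Fin N → Matrix (Fin n) (Fin n) ℝ) (i k : Fin n) (c : Fin (n + 4)) (x : Pt n) :
    pd c (Pf A i k) x = (if q1 n = c then 1 else 0) * Kf A i k x := by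
  unfold Pf Kf
  rw [pd_sum _ (fun α _ => ((differentiable_const _).fun_mul ((diff_coord _).fun_pow _)) x)]
  rw [Finset.mul_sum]
  refine Finset.sum_congr rfl fun α _ => ?_
  rw [pd_const_mul (((diff_coord _).fun_pow _) x), pd_pow_succ (diff_coord _), pd_coord]
  ring
/-! ### Explicit derivative of the metric, and Christoffel symbols -/

/-- Explicit formula for `∂_b G_{dc}`. -/
def Gd (A : Fin N → Matrix (Fin n) (Fin n) ℝ) (b d c : Fin (n + 4)) (x : Pt n) : ℝ :=
  (∑ i : Fin n, (if (d = ehat i ∧ c = q2 n) ∨ (d = q2 n ∧ c = ehat i) then (1 : ℝ) else 0) *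
      ((∑ k : Fin n, (if ehat k = b then 1 else 0) * Pf A i k x)
        + (if q1 n = b then 1 else 0) * Qf A i x))
  + (if (d = q1 n ∧ c = q1 n) ∨ (d = q2 n ∧ c = q2 n) then (1 : ℝ) else 0) *
      (∑ k : Fin n, (if ehat k = b then 1 else 0) * (2 * x (ehat k)))

lemma pdG (A : Fin N → Matrix (Fin n) (Fin n) ℝ) (b d c : Fin (n + 4)) (x : Pt n) :
    pd b (fun y => Gmet A y d c) x = Gd A b d c x := by
  have hfun : (fun y => Gmet A y d c) = (fun y =>
      ((if (d = p1 n ∧ c = q1 n) ∨ (d = q1 n ∧ c = p1 n) then (1 : ℝ) else 0)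
        + (if (d = p2 n ∧ c = q2 n) ∨ (d = q2 n ∧ c = p2 n) then (1 : ℝ) else 0)
        + (∑ i : Fin n, if d = ehat i ∧ c = ehat i then (1 : ℝ) else 0))
      + ((∑ i : Fin n,
          (if (d = ehat i ∧ c = q2 n) ∨ (d = q2 n ∧ c = ehat i) then (1 : ℝ) else 0) * u A i y)
        + (if (d = q1 n ∧ c = q1 n) ∨ (d = q2 n ∧ c = q2 n) then (1 : ℝ) else 0) * Fq n y)) := by
    funext y
    simp only [Gmet, ite_mul, one_mul, zero_mul]
    ring
  rw [hfun]
  have hd1 : DifferentiableAt ℝ (fun y : Pt n => ∑ i : Fin n,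
      (if (d = ehat i ∧ c = q2 n) ∨ (d = q2 n ∧ c = ehat i) then (1 : ℝ) else 0) * u A i y) x :=
    DifferentiableAt.fun_sum fun i _ => ((diff_u A i).const_mul _) x
  have hd2 : DifferentiableAt ℝ (fun y : Pt n =>
      (if (d = q1 n ∧ c = q1 n) ∨ (d = q2 n ∧ c = q2 n) then (1 : ℝ) else 0) * Fq n y) x :=
    (diff_Fq.const_mul _) x
  rw [pd_add (differentiableAt_const _) (hd1.fun_add hd2), pd_const, pd_add hd1 hd2,
    pd_sum _ (fun i _ => ((diff_u A i).const_mul _) x),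
    pd_const_mul (diff_Fq x), pd_Fq]
  rw [Gd, zero_add]
  congr 1
  refine Finset.sum_congr rfl fun i _ => ?_
  rw [pd_const_mul ((diff_u A i) x), pd_u]

/-- Master formula for the Christoffel symbols. -/
lemma Γchr_eq (A : Fin N → Matrix (Fin n) (Fin n) ℝ) (a b c : Fin (n + 4)) (x : Pt n) :
    Γchr A a b c x = (1 / 2) * ∑ d : Fin (n + 4), Ginv A x a d *
      (Gd A b d c x + Gd A c b d x - Gd A d b c x) := by
  rw [Γchr, Gmet_inv]
  congr 1
  refine Finset.sum_congr rfl fun d _ => ?_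
  rw [pdG, pdG, pdG]

section GdVanish

variable (A : Fin N → Matrix (Fin n) (Fin n) ℝ) (b d c : Fin (n + 4)) (x : Pt n)

@[simp] lemma Gd_b_p1 : Gd A (p1 n) d c x = 0 := by simp [Gd]
@[simp] lemma Gd_b_p2 : Gd A (p2 n) d c x = 0 := by simp [Gd]
@[simp] lemma Gd_d_p1 : Gd A b (p1 n) c x = 0 := by simp [Gd]
@[simp] lemma Gd_d_p2 : Gd A b (p2 n) c x = 0 := by simp [Gd]
@[simp] lemma Gd_c_p1 : Gd A b d (p1 n) x = 0 := by simp [Gd]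
@[simp] lemma Gd_c_p2 : Gd A b d (p2 n) x = 0 := by simp [Gd]

end GdVanish

section Gamma

variable (A : Fin N → Matrix (Fin n) (Fin n) ℝ) (b c : Fin (n + 4)) (x : Pt n) (i k : Fin n)

@[simp] lemma Γ_q1 : Γchr A (q1 n) b c x = 0 := by
  rw [Γchr_eq, sum_split]
  simp

@[simp] lemma Γ_q2 : Γchr A (q2 n) b c x = 0 := by
  rw [Γchr_eq, sum_split]
  simp

@[simp] lemma Γ_e_c_p1 : Γchr A (ehat i) c (p1 n) x = 0 := by
  rw [Γchr_eq, sum_split]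
  simp

@[simp] lemma Γ_e_c_p2 : Γchr A (ehat i) c (p2 n) x = 0 := by
  rw [Γchr_eq, sum_split]
  simp

lemma Γ_e_c_e (hA : ∀ α, (A α)ᵀ = -A α) :
    Γchr A (ehat i) c (ehat k) x = (if c = q2 n then 1 else 0) * Pf A i k x := by
  rw [Γchr_eq, sum_split]
  rcases cases5 c with rfl | rfl | ⟨m, rfl⟩ | rfl | rfl <;>
    simp [Gd, Finset.mul_sum, mul_ite, ite_mul] <;>
    rw [Pf_skew hA] <;> ring

end Gamma
/-! ### The curvature computation -/

lemma Rcurv_eq (A : Fin N → Matrix (Fin n) (Fin n) ℝ) (hA : ∀ α, (A α)ᵀ = -A α)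
    (i j : Fin n) (c d : Fin (n + 4)) (x : Pt n) :
    Rcurv A (ehat i) (ehat j) c d x
      = (if d = q2 n then 1 else 0) * ((if q1 n = c then 1 else 0) * Kf A i j x)
        - (if c = q2 n then 1 else 0) * ((if q1 n = d then 1 else 0) * Kf A i j x) := by
  rw [Rcurv]
  have hfd : (Γchr A (ehat i) d (ehat j))
      = fun y => (if d = q2 n then (1 : ℝ) else 0) * Pf A i j y :=
    funext fun y => Γ_e_c_e A d y i j hA
  have hfc : (Γchr A (ehat i) c (ehat j))
      = fun y => (if c = q2 n then (1 : ℝ) else 0) * Pf A i j y :=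
    funext fun y => Γ_e_c_e A c y i j hA
  rw [hfd, hfc, pd_const_mul ((diff_Pf A i j) x), pd_const_mul ((diff_Pf A i j) x),
    pd_Pf, pd_Pf]
  rw [sum_split]
  have hz : ∀ kk : Fin n,
      Γchr A (ehat i) c (ehat kk) x * Γchr A (ehat kk) d (ehat j) x
        - Γchr A (ehat i) d (ehat kk) x * Γchr A (ehat kk) c (ehat j) x = 0 := by
    intro kk
    rw [Γ_e_c_e A c x i kk hA, Γ_e_c_e A d x kk j hA, Γ_e_c_e A d x i kk hA,
      Γ_e_c_e A c x kk j hA]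
    ring
  simp [hz]

/-- `R^î_{ĵ,n+3,n+4}(x) = Σ_α α (A_α)_{î−2,ĵ−2} (x^{n+3})^{α−1}` and `R^î_{ĵ,a,b} = 0`
whenever `{a,b} ≠ {n+3,n+4}`. -/
theorem statement6 (n N : ℕ) (hn : 1 ≤ n) (hN : 1 ≤ N)
    (A : Fin N → Matrix (Fin n) (Fin n) ℝ) (hA : ∀ α, (A α)ᵀ = -A α) :
    (∀ (i j : Fin n) (x : Pt n),
      Rcurv A (ehat i) (ehat j) (q1 n) (q2 n) x
        = ∑ α : Fin N, ((α.1 : ℝ) + 1) * A α i j * x (q1 n) ^ α.1) ∧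
    (∀ (i j : Fin n) (a b : Fin (n + 4)),
      ({a, b} : Set (Fin (n + 4))) ≠ {q1 n, q2 n} →
      ∀ x : Pt n, Rcurv A (ehat i) (ehat j) a b x = 0) := by
  constructor
  · intro i j x
    rw [Rcurv_eq A hA i j (q1 n) (q2 n) x]
    simp [Kf]
  · intro i j a b hab x
    rw [Rcurv_eq A hA i j a b x]
    have h1 : ¬(a = q1 n ∧ b = q2 n) := by rintro ⟨rfl, rfl⟩; exact hab rfl
    have h2 : ¬(a = q2 n ∧ b = q1 n) := by
      rintro ⟨rfl, rfl⟩; exact hab (Set.pair_comm _ _)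
    by_cases hb : b = q2 n <;> by_cases ha : q1 n = a <;> by_cases ha2 : a = q2 n <;>
      by_cases hb2 : q1 n = b <;> simp_all

end
end HolPaper
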